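/- Let (A, d) be an m-PD-CDGA over a field k. Then for every a ∈ MC(A) and every 0 ≤ i ≤ m, the k-vector space H^i(A, δ_a) is isomorphic to the dual of H^{m-i}(A, δ_{-a}); in particular dim_k H^i(A, δ_a) = dim_k H^{m-i}(A, δ_{-a}). -/

import Mathlib

open scoped TensorProduct DirectSum

/-- A commutative differential graded algebra (CDGA) over a field `k`:
an ℕ-graded, associative, unital, graded-commutative `k`-algebra together with a
degree `+1` differential satisfying `d ∘ d = 0` and the graded Leibniz rule. -/
structure CDGA (k : Type) [Field k] : Type 1 where
  carrier : Type
  [ringCarrier : Ring carrier]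
  [algebraCarrier : Algebra k carrier]
  grading : ℕ → Submodule k carrier
  [gradedAlgebra : GradedAlgebra grading]
  gcomm : ∀ ⦃i j : ℕ⦄ ⦃u v : carrier⦄, u ∈ grading i → v ∈ grading j →
    u * v = ((-1 : k) ^ (i * j)) • (v * u)
  d : carrier →ₗ[k] carrier
  d_mem : ∀ ⦃i : ℕ⦄ ⦃u : carrier⦄, u ∈ grading i → d u ∈ grading (i + 1)
  d_sq : ∀ u : carrier, d (d u) = 0
  leibniz : ∀ ⦃i j : ℕ⦄ ⦃u v : carrier⦄, u ∈ grading i → v ∈ grading j →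
    d (u * v) = d u * v + ((-1 : k) ^ i) • (u * d v)

attribute [instance] CDGA.ringCarrier CDGA.algebraCarrier CDGA.gradedAlgebra

namespace CDGA

variable {k : Type} [Field k]

/-- A CDGA is of finite type if each graded piece is finite-dimensional. -/
def FiniteType (A : CDGA k) : Prop := ∀ i : ℕ, FiniteDimensional k (A.grading i)

/-- A CDGA is connected if its degree-0 part is the span of the unit. -/
def Connected (A : CDGA k) : Prop :=
  ∀ u ∈ A.grading 0, ∃ c : k, u = algebraMap k A.carrier c

/-- The Maurer–Cartan condition: `a·a + d a = 0` for `a ∈ A¹`. -/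
def IsMC (A : CDGA k) (a : A.grading 1) : Prop :=
  (a : A.carrier) * (a : A.carrier) + A.d (a : A.carrier) = 0

/-- The differential `δ_a(u) = a·u + d u` of the Aomoto complex, in degree `q`. -/
noncomputable def delta (A : CDGA k) (a : A.grading 1) (q : ℕ) :
    A.grading q →ₗ[k] A.grading (q + 1) where
  toFun u := ⟨(a : A.carrier) * (u : A.carrier) + A.d (u : A.carrier), by
    have h1 : (a : A.carrier) * (u : A.carrier) ∈ A.grading (1 + q) :=
      SetLike.mul_mem_graded a.2 u.2
    rw [add_comm] at h1
    exact Submodule.add_mem _ h1 (A.d_mem u.2)⟩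
  map_add' u v := by
    ext
    simp only [Submodule.coe_add, mul_add, map_add]
    abel
  map_smul' c u := by
    ext
    simp only [SetLike.val_smul, RingHom.id_apply, Submodule.coe_smul, map_smul,
      mul_smul_comm, smul_add]

/-- Cocycles of the Aomoto complex in degree `q`. -/
noncomputable def cocycles (A : CDGA k) (a : A.grading 1) (q : ℕ) :
    Submodule k (A.grading q) :=
  LinearMap.ker (A.delta a q)

/-- Coboundaries of the Aomoto complex in degree `q`. -/
noncomputable def coboundaries (A : CDGA k) (a : A.grading 1) : (q : ℕ) → Submodule k (A.grading q)
  | 0 => ⊥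
  | (q + 1) => LinearMap.range (A.delta a q)

/-- Cohomology of the Aomoto complex `H^q(A, δ_a)`. -/
abbrev cohomology (A : CDGA k) (a : A.grading 1) (q : ℕ) :=
  @HasQuotient.Quotient _ _ (@Submodule.hasQuotient k (A.cocycles a q) _ _ _)
    ((A.coboundaries a q).comap (A.cocycles a q).subtype)

/-- `dim_k H^q(A, δ_a)`. -/
noncomputable def hdim (A : CDGA k) (a : A.grading 1) (q : ℕ) : ℕ :=
  Module.finrank k (A.cohomology a q)

/-- The resonance variety `R^q_s(A) = {a ∈ MC(A) : dim_k H^q(A, δ_a) ≥ s}`. -/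
noncomputable def Res (A : CDGA k) (q s : ℕ) : Set (A.grading 1) :=
  {a | A.IsMC a ∧ s ≤ A.hdim a q}

/-- A morphism of CDGAs: a `k`-algebra map preserving degrees and differentials. -/
structure Hom (A B : CDGA k) where
  toAlgHom : A.carrier →ₐ[k] B.carrier
  map_mem : ∀ ⦃i : ℕ⦄ ⦃u : A.carrier⦄, u ∈ A.grading i → toAlgHom u ∈ B.grading i
  map_d : ∀ u : A.carrier, toAlgHom (A.d u) = B.d (toAlgHom u)

/-- The restriction `φ^i : A^i → B^i` of a CDGA morphism. -/
def Hom.res {A B : CDGA k} (φ : Hom A B) (i : ℕ) : A.grading i →ₗ[k] B.grading i where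
  toFun u := ⟨φ.toAlgHom u, φ.map_mem u.2⟩
  map_add' u v := by ext; simp
  map_smul' c u := by ext; simp

/-- Composition of CDGA morphisms. -/
def Hom.comp {A B C : CDGA k} (ψ : Hom B C) (φ : Hom A B) : Hom A C where
  toAlgHom := ψ.toAlgHom.comp φ.toAlgHom
  map_mem := fun _ _ hu => ψ.map_mem (φ.map_mem hu)
  map_d := fun u => by
    simp only [AlgHom.comp_apply]
    rw [φ.map_d, ψ.map_d]

end CDGA

/-- A Poincaré duality CDGA of formal dimension `m`: a connected, finite-type CDGA
equipped with an orientation `ε` (a linear functional supported in degree `m`) such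
that the pairing `A^i × A^{m-i} → k`, `(u,v) ↦ ε(u·v)`, is non-singular for `i ≤ m`
(equivalently, non-degenerate on both sides, in finite dimensions), `A^i = 0` for
`i > m`, and `d(A^{m-1}) = 0`. -/
structure PDCDGA (k : Type) [Field k] (m : ℕ) extends CDGA k where
  finType : ∀ i : ℕ, FiniteDimensional k (grading i)
  connected : ∀ u ∈ grading 0, ∃ c : k, u = algebraMap k carrier c
  ε : carrier →ₗ[k] k
  ε_supp : ∀ ⦃i : ℕ⦄, i ≠ m → ∀ ⦃u : carrier⦄, u ∈ grading i → ε u = 0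
  nondeg_left : ∀ ⦃i : ℕ⦄, i ≤ m → ∀ ⦃u : carrier⦄, u ∈ grading i →
    (∀ ⦃v : carrier⦄, v ∈ grading (m - i) → ε (u * v) = 0) → u = 0
  nondeg_right : ∀ ⦃i : ℕ⦄, i ≤ m → ∀ ⦃v : carrier⦄, v ∈ grading (m - i) →
    (∀ ⦃u : carrier⦄, u ∈ grading i → ε (u * v) = 0) → v = 0
  grading_top : ∀ ⦃i : ℕ⦄, m < i → grading i = ⊥
  d_top : ∀ ⦃u : carrier⦄, u ∈ grading (m - 1) → d u = 0


section Aux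

open Module LinearMap

variable {k : Type} [Field k] {m : ℕ}

namespace CDGA

variable (B : CDGA k)

lemma delta_coe (a : B.grading 1) (q : ℕ) (u : B.grading q) :
    ((B.delta a q u : B.carrier)) = (a : B.carrier) * u + B.d u := rfl

lemma isMC_neg {a : B.grading 1} (ha : B.IsMC a) : B.IsMC (-a) := by
  have h2 : (a : B.carrier) * a = ((-1 : k) ^ (1 * 1)) • ((a : B.carrier) * a) :=
    B.gcomm a.2 a.2
  rw [mul_one, pow_one, neg_smul, one_smul] at h2
  have hsum : (a : B.carrier) * a + (a : B.carrier) * a = 0 := by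
    nth_rewrite 1 [h2]; exact neg_add_cancel _
  unfold CDGA.IsMC at ha ⊢
  have hca : ((-a : B.grading 1) : B.carrier) = -(a : B.carrier) := rfl
  rw [hca, neg_mul_neg, map_neg]
  have hre : (a : B.carrier) * a + -B.d (a : B.carrier)
      = ((a : B.carrier) * a + (a : B.carrier) * a)
        - ((a : B.carrier) * a + B.d (a : B.carrier)) := by abel
  rw [hre, hsum, ha, sub_zero]

lemma delta_delta {a : B.grading 1} (ha : B.IsMC a) (q : ℕ) (u : B.grading q) :
    B.delta a (q + 1) (B.delta a q u) = 0 := by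
  apply Subtype.ext
  rw [delta_coe]
  show (a : B.carrier) * ((a : B.carrier) * u + B.d u)
      + B.d ((a : B.carrier) * u + B.d u) = 0
  rw [mul_add, map_add, B.leibniz a.2 u.2, B.d_sq, pow_one, neg_smul, one_smul]
  have key : (a : B.carrier) * ((a : B.carrier) * u)
      + B.d (a : B.carrier) * (u : B.carrier) = 0 := by
    rw [← mul_assoc, ← add_mul, ha, zero_mul]
  calc (a : B.carrier) * ((a : B.carrier) * u) + (a : B.carrier) * B.d u
        + (B.d (a : B.carrier) * (u : B.carrier)
            + -((a : B.carrier) * B.d u) + 0)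
      = ((a : B.carrier) * ((a : B.carrier) * u)
          + B.d (a : B.carrier) * (u : B.carrier))
        + ((a : B.carrier) * B.d u - (a : B.carrier) * B.d u) := by abel
    _ = 0 := by rw [key, sub_self, add_zero]

lemma coboundaries_le {a : B.grading 1} (ha : B.IsMC a) (q : ℕ) :
    B.coboundaries a q ≤ B.cocycles a q := by
  cases q with
  | zero => exact bot_le
  | succ t =>
      rintro x ⟨u, rfl⟩
      exact B.delta_delta ha t u

set_option synthInstance.maxHeartbeats 1000000 in
set_option maxHeartbeats 1000000 in
lemma hdim_add {a : B.grading 1} (ha : B.IsMC a) (q : ℕ)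
    [FiniteDimensional k (B.grading q)] :
    B.hdim a q + finrank k (B.coboundaries a q)
      + finrank k (LinearMap.range (B.delta a q)) = finrank k (B.grading q) := by
  have h1 : B.hdim a q
      + finrank k ((B.coboundaries a q).comap (B.cocycles a q).subtype)
      = finrank k (B.cocycles a q) :=
    Submodule.finrank_quotient_add_finrank _
  have h2 : finrank k ((B.coboundaries a q).comap (B.cocycles a q).subtype)
      = finrank k (B.coboundaries a q) :=
    (Submodule.comapSubtypeEquivOfLe (B.coboundaries_le ha q)).finrank_eq
  have h3 : finrank k (LinearMap.range (B.delta a q))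
      + finrank k (LinearMap.ker (B.delta a q)) = finrank k (B.grading q) :=
    LinearMap.finrank_range_add_finrank_ker _
  have h4 : finrank k (B.cocycles a q) = finrank k (LinearMap.ker (B.delta a q)) := rfl
  omega

end CDGA

namespace PDCDGA

variable (A : PDCDGA k m)

/-- The Poincaré duality pairing `A^q → (A^{m-q})^*`. -/
noncomputable def pairing (q : ℕ) :
    A.grading q →ₗ[k] Module.Dual k (A.grading (m - q)) :=
  LinearMap.mk₂ k (fun u v => A.ε ((u : A.carrier) * v))
    (fun u u' v => by simp [add_mul])
    (fun c u v => by simp [smul_mul_assoc])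
    (fun u v v' => by simp [mul_add])
    (fun c u v => by simp [mul_smul_comm])

lemma pairing_apply (q : ℕ) (u : A.grading q) (v : A.grading (m - q)) :
    A.pairing q u v = A.ε ((u : A.carrier) * v) := rfl

lemma pairing_inj {q : ℕ} (hq : q ≤ m) : Function.Injective (A.pairing q) := by
  rw [← LinearMap.ker_eq_bot, LinearMap.ker_eq_bot']
  intro u hu
  apply Subtype.ext
  refine A.nondeg_left hq u.2 fun v hv => ?_
  exact DFunLike.congr_fun hu ⟨v, hv⟩

lemma pairing_flip_inj {q : ℕ} (hq : q ≤ m) :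
    Function.Injective (A.pairing q).flip := by
  rw [← LinearMap.ker_eq_bot, LinearMap.ker_eq_bot']
  intro v hv
  apply Subtype.ext
  refine A.nondeg_right hq v.2 fun u hu => ?_
  exact DFunLike.congr_fun hv ⟨u, hu⟩

lemma finrank_grading_eq {q : ℕ} (hq : q ≤ m) :
    finrank k (A.grading q) = finrank k (A.grading (m - q)) := by
  haveI := A.finType q
  haveI := A.finType (m - q)
  have h1 : finrank k (A.grading q) ≤ finrank k (Module.Dual k (A.grading (m - q))) :=
    LinearMap.finrank_le_finrank_of_injective (A.pairing_inj hq)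
  have h2 : finrank k (A.grading (m - q)) ≤ finrank k (Module.Dual k (A.grading q)) :=
    LinearMap.finrank_le_finrank_of_injective (A.pairing_flip_inj hq)
  rw [Subspace.dual_finrank_eq] at h1 h2
  omega

/-- The Poincaré duality pairing as a linear equivalence. -/
noncomputable def pairingEquiv {q : ℕ} (hq : q ≤ m) :
    A.grading q ≃ₗ[k] Module.Dual k (A.grading (m - q)) := by
  haveI := A.finType q
  haveI := A.finType (m - q)
  exact LinearEquiv.ofBijective (A.pairing q)
    ⟨A.pairing_inj hq,
      (LinearMap.injective_iff_surjective_of_finrank_eq_finrank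
        (by rw [Subspace.dual_finrank_eq]; exact A.finrank_grading_eq hq)).mp
        (A.pairing_inj hq)⟩

lemma pairingEquiv_apply {q : ℕ} (hq : q ≤ m) (u : A.grading q)
    (v : A.grading (m - q)) :
    A.pairingEquiv hq u v = A.ε ((u : A.carrier) * v) := rfl

lemma adjoint_eq (a : A.grading 1) {q : ℕ} (hq : q + 1 ≤ m)
    (u : A.grading q) (v : A.grading (m - (q + 1))) :
    A.ε ((A.toCDGA.delta a q u : A.carrier) * v)
      = ((-1 : k) ^ (q + 1))
        * A.ε ((u : A.carrier) * (A.toCDGA.delta (-a) (m - (q + 1)) v : A.carrier)) := by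
  have hca : ((-a : A.grading 1) : A.carrier) = -(a : A.carrier) := rfl
  rw [CDGA.delta_coe, CDGA.delta_coe, hca]
  have h1 : (a : A.carrier) * (u : A.carrier)
      = ((-1 : k) ^ q) • ((u : A.carrier) * a) := by
    have h := A.gcomm a.2 u.2
    rwa [one_mul] at h
  have hmem : (u : A.carrier) * v ∈ A.grading (m - 1) := by
    have h := SetLike.mul_mem_graded u.2 v.2
    have he : q + (m - (q + 1)) = m - 1 := by omega
    rwa [he] at h
  have h3 := A.leibniz u.2 v.2
  rw [A.d_top hmem] at h3
  have h4 : A.d (u : A.carrier) * (v : A.carrier)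
      = -(((-1 : k) ^ q) • ((u : A.carrier) * A.d v)) :=
    eq_neg_of_add_eq_zero_left h3.symm
  rw [add_mul, map_add, h1, smul_mul_assoc, mul_assoc, map_smul, h4, map_neg, map_smul,
    neg_mul, mul_add, mul_neg, map_add, map_neg, smul_eq_mul, smul_eq_mul]
  ring

lemma rank_adjoint (a : A.grading 1) {q : ℕ} (hq : q + 1 ≤ m) :
    finrank k (LinearMap.range (A.toCDGA.delta a q))
      = finrank k (LinearMap.range (A.toCDGA.delta (-a) (m - (q + 1)))) := by
  haveI := A.finType q
  haveI := A.finType (q + 1)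
  haveI := A.finType (m - q)
  haveI := A.finType (m - (q + 1))
  haveI := A.finType ((m - (q + 1)) + 1)
  set D := A.toCDGA.delta a q with hD
  set D' := A.toCDGA.delta (-a) (m - (q + 1)) with hD'
  have hidx : A.grading ((m - (q + 1)) + 1) = A.grading (m - q) := by
    congr 1; omega
  set e : (A.grading ((m - (q + 1)) + 1)) ≃ₗ[k] (A.grading (m - q)) :=
    LinearEquiv.ofEq _ _ hidx with he
  set g : A.grading (m - (q + 1)) →ₗ[k] A.grading (m - q) := e.toLinearMap ∘ₗ D' with hg
  set P := A.pairingEquiv hq with hP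
  set Q := A.pairingEquiv (show q ≤ m by omega) with hQ
  have key : P.toLinearMap ∘ₗ D
      = ((-1 : k) ^ (q + 1)) • (g.dualMap ∘ₗ Q.toLinearMap) := by
    apply LinearMap.ext; intro u
    apply LinearMap.ext; intro v
    have hgv : ((g v : A.carrier)) = (D' v : A.carrier) := by
      rw [hg]
      exact LinearEquiv.coe_ofEq_apply hidx (D' v)
    simp only [LinearMap.comp_apply, LinearMap.smul_apply, LinearMap.dualMap_apply,
      LinearEquiv.coe_coe, smul_eq_mul]
    rw [hP, hQ, A.pairingEquiv_apply, A.pairingEquiv_apply, hgv]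
    exact A.adjoint_eq a hq u v
  calc finrank k (LinearMap.range D)
      = finrank k (Submodule.map P.toLinearMap (LinearMap.range D)) :=
        (LinearEquiv.finrank_map_eq P _).symm
    _ = finrank k (LinearMap.range (P.toLinearMap ∘ₗ D)) := by
        rw [LinearMap.range_comp]
    _ = finrank k (LinearMap.range
          (((-1 : k) ^ (q + 1)) • (g.dualMap ∘ₗ Q.toLinearMap))) := by rw [key]
    _ = finrank k (LinearMap.range (g.dualMap ∘ₗ Q.toLinearMap)) := by
        rw [LinearMap.range_smul _ _ (by simp : ((-1 : k) ^ (q + 1)) ≠ 0)]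
    _ = finrank k (LinearMap.range g.dualMap) := by
        rw [LinearMap.range_comp_of_range_eq_top _ Q.range]
    _ = finrank k (LinearMap.range g) :=
        LinearMap.finrank_range_dualMap_eq_finrank_range g
    _ = finrank k (Submodule.map e.toLinearMap (LinearMap.range D')) := by
        rw [hg, LinearMap.range_comp]
    _ = finrank k (LinearMap.range D') := LinearEquiv.finrank_map_eq e _

lemma rank_top (a : A.grading 1) {q : ℕ} (hq : m ≤ q) :
    finrank k (LinearMap.range (A.toCDGA.delta a q)) = 0 := by
  haveI := A.finType (q + 1)
  have h : A.grading (q + 1) = ⊥ := A.grading_top (by omega)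
  have h0 : finrank k (A.grading (q + 1)) = 0 := by
    rw [h]; exact finrank_bot k _
  have hle := Submodule.finrank_le (LinearMap.range (A.toCDGA.delta a q))
  omega

end PDCDGA

end Aux

/-- Let `(A, d)` be an `m`-PD-CDGA over `k`.  For every
`a ∈ MC(A)` and every `0 ≤ i ≤ m`, the `k`-vector space `H^i(A, δ_a)` is isomorphic
to the dual of `H^{m-i}(A, δ_{-a})`; in particular
`dim_k H^i(A, δ_a) = dim_k H^{m-i}(A, δ_{-a})`. -/
theorem statement15 {k : Type} [Field k] {m : ℕ} (A : PDCDGA k m)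
    (a : A.toCDGA.grading 1) (ha : A.toCDGA.IsMC a) (i : ℕ) (him : i ≤ m) :
    Nonempty (A.toCDGA.cohomology a i ≃ₗ[k]
      Module.Dual k (A.toCDGA.cohomology (-a) (m - i))) ∧
    A.toCDGA.hdim a i = A.toCDGA.hdim (-a) (m - i) := by
  have hMCneg : A.toCDGA.IsMC (-a) := A.toCDGA.isMC_neg ha
  haveI := A.finType i
  haveI := A.finType (m - i)
  have E1 := A.toCDGA.hdim_add ha i
  have E2 := A.toCDGA.hdim_add hMCneg (m - i)
  have E3 := A.finrank_grading_eq him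
  have E4 : Module.finrank k (A.toCDGA.coboundaries a i)
      = Module.finrank k (LinearMap.range (A.toCDGA.delta (-a) (m - i))) := by
    cases i with
    | zero =>
        have h0 : Module.finrank k (A.toCDGA.coboundaries a 0) = 0 := by
          show Module.finrank k (⊥ : Submodule k (A.toCDGA.grading 0)) = 0
          exact finrank_bot k _
        have h1 : Module.finrank k
            (LinearMap.range (A.toCDGA.delta (-a) (m - 0))) = 0 := by
          rw [Nat.sub_zero]; exact A.rank_top (-a) le_rfl
        rw [h0, h1]
    | succ j =>
        exact A.rank_adjoint a him
  have E5 : Module.finrank k (LinearMap.range (A.toCDGA.delta a i))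
      = Module.finrank k (A.toCDGA.coboundaries (-a) (m - i)) := by
    rcases lt_or_ge i m with hlt | hge
    · have key : ∀ t : ℕ, m - i = t + 1 →
          Module.finrank k (A.toCDGA.coboundaries (-a) (m - i))
            = Module.finrank k (LinearMap.range (A.toCDGA.delta (-a) t)) := by
        intro t ht
        rw [ht]
        rfl
      rw [key (m - (i + 1)) (by omega)]
      exact A.rank_adjoint a (by omega)
    · have h0 : Module.finrank k (LinearMap.range (A.toCDGA.delta a i)) = 0 :=
        A.rank_top a hge
      have hmi : m - i = 0 := by omega
      have h1 : Module.finrank k (A.toCDGA.coboundaries (-a) (m - i)) = 0 := by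
        rw [hmi]
        show Module.finrank k (⊥ : Submodule k (A.toCDGA.grading 0)) = 0
        exact finrank_bot k _
      rw [h0, h1]
  have hdimeq : A.toCDGA.hdim a i = A.toCDGA.hdim (-a) (m - i) := by omega
  refine ⟨⟨LinearEquiv.ofFinrankEq _ _ ?_⟩, hdimeq⟩
  rw [Subspace.dual_finrank_eq]
  exact hdimeq
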